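/- (Closed-form flux in Region I.) For every (x,y) with y ≤ x + Δμ + ΔGc, the flux satisfies Ψ(x,y) = (1 − R(x,y))·k0·k1·kcat·(S·e^(Δμ) − P)/(k0·kcat + k0·k1·e^(x+Δμ) + k1·kcat·e^(Δμ)). In particular, in Region I the ratio Ψ(x,y)/(1 − R(x,y)) does not depend on y. -/

import Mathlib

/-!
Eliminating `π_EP` from the balance equations at `ES` and `EP` expresses the flux of any
three-state cycle as `π_E · (a c f − b d g) / (b d + b f + c f)`. In Region I the minima in the
catalytic rates are resolved (`c = kcat`, `d = kcat · e^(y − x − Δμ)`), and every term of both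
numerator and denominator then carries the common factor `e^(y − Δμ)`, which cancels and leaves
a coefficient free of `y`. Since `1 − R = π_E > 0`, the ratio `Ψ / (1 − R)` is that coefficient.
-/

open Real Filter

/-- A probability vector `(pE, pES, pEP)` is a stationary distribution of the
three-state cycle chain with rates `a,b,c,d,f,g` if its entries are nonnegative,
sum to 1, and satisfy the global balance equations. -/
def IsStat (a b c d f g pE pES pEP : ℝ) : Prop :=
  0 ≤ pE ∧ 0 ≤ pES ∧ 0 ≤ pEP ∧ pE + pES + pEP = 1 ∧
  (a + g) * pE = b * pES + f * pEP ∧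
  (b + c) * pES = a * pE + d * pEP ∧
  (d + f) * pEP = c * pES + g * pE

/-- The flux `a π_E − b π_ES` of the cycle `E → ES → EP → E` per unit of free enzyme `π_E`. -/
noncomputable def cycleFluxCoeff (a b c d f g : ℝ) : ℝ :=
  (a * c * f - b * d * g) / (b * d + b * f + c * f)

namespace IsStat

variable {a b c d f g pE pES pEP : ℝ}

theorem flux_eq (h : IsStat a b c d f g pE pES pEP) (hD : b * d + b * f + c * f ≠ 0) :
    a * pE - b * pES = pE * cycleFluxCoeff a b c d f g := by
  obtain ⟨-, -, -, -, -, hES, hEP⟩ := h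
  rw [cycleFluxCoeff, mul_div_assoc', eq_div_iff hD]
  linear_combination (-b) * ((d + f) * hES + d * hEP)

theorem pE_pos (h : IsStat a b c d f g pE pES pEP) (hb : 0 < b) (hf : 0 < f) : 0 < pE := by
  obtain ⟨hE, hES, hEP, hsum, hbal, -, -⟩ := h
  refine hE.lt_of_ne fun hE0 => ?_
  subst hE0
  have hES0 : pES = 0 := by nlinarith
  have hEP0 : pEP = 0 := by nlinarith
  simp [hES0, hEP0] at hsum

end IsStat

theorem min_one_exp_of_nonneg {t : ℝ} (ht : 0 ≤ t) : min 1 (exp t) = 1 :=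
  min_eq_left (one_le_exp ht)

theorem min_one_exp_of_nonpos {t : ℝ} (ht : t ≤ 0) : min 1 (exp t) = exp t :=
  min_eq_right (exp_le_one_iff.mpr ht)

theorem cycleFluxCoeff_regionI {k0 k1 kcat S P dmu dGc x y : ℝ}
    (hk0 : 0 < k0) (hk1 : 0 < k1) (hkcat : 0 < kcat) (hy : y ≤ x + dmu + dGc) :
    cycleFluxCoeff (k0 * S) (k0 * exp x)
        (kcat * min 1 (exp (x - y + dmu + dGc)))
        (kcat * exp dGc * min 1 (exp (y - x - dmu - dGc)))
        (k1 * exp y) (k1 * P) =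
      k0 * k1 * kcat * (S * exp dmu - P) /
        (k0 * kcat + k0 * k1 * exp (x + dmu) + k1 * kcat * exp dmu) := by
  rw [min_one_exp_of_nonneg (by linarith), min_one_exp_of_nonpos (by linarith), cycleFluxCoeff]
  have hd : exp dGc * exp (y - x - dmu - dGc) = exp (y - x - dmu) := by
    rw [← exp_add]; ring_nf
  have hy' : exp y = exp (y - x - dmu) * exp x * exp dmu := by
    rw [← exp_add, ← exp_add]; ring_nf
  rw [mul_assoc kcat, hd, hy', exp_add]
  have := exp_pos (y - x - dmu)
  have := exp_pos x
  have := exp_pos dmu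
  rw [div_eq_div_iff (by positivity) (by positivity)]
  ring

theorem stmt_12_general
    (k0 k1 kcat S P dmu dGc : ℝ)
    (hk0 : 0 < k0) (hk1 : 0 < k1) (hkcat : 0 < kcat)
    (pE pES pEP R Psi : ℝ → ℝ → ℝ)
    (hstat : ∀ x y : ℝ,
      IsStat (k0 * S) (k0 * exp x)
        (kcat * min 1 (exp (x - y + dmu + dGc)))
        (kcat * exp dGc * min 1 (exp (y - x - dmu - dGc)))
        (k1 * exp y) (k1 * P)
        (pE x y) (pES x y) (pEP x y))
    (hR : ∀ x y : ℝ, R x y = pES x y + pEP x y)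
    (hPsi : ∀ x y : ℝ, Psi x y = k0 * S * pE x y - k0 * exp x * pES x y)
    : (∀ x y : ℝ, y ≤ x + dmu + dGc →
        Psi x y = (1 - R x y) *
          (k0 * k1 * kcat * (S * exp dmu - P) /
            (k0 * kcat + k0 * k1 * exp (x + dmu) + k1 * kcat * exp dmu))) ∧
      (∀ x y₁ y₂ : ℝ, y₁ ≤ x + dmu + dGc → y₂ ≤ x + dmu + dGc →
        Psi x y₁ / (1 - R x y₁) = Psi x y₂ / (1 - R x y₂)) := by
  have hfree : ∀ x y, 1 - R x y = pE x y := fun x y => by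
    linarith [hR x y, (hstat x y).2.2.2.1]
  have hfree_pos : ∀ x y, 0 < 1 - R x y := fun x y => by
    rw [hfree]; exact (hstat x y).pE_pos (by positivity) (by positivity)
  have hflux : ∀ x y, y ≤ x + dmu + dGc → Psi x y = (1 - R x y) *
      (k0 * k1 * kcat * (S * exp dmu - P) /
        (k0 * kcat + k0 * k1 * exp (x + dmu) + k1 * kcat * exp dmu)) := fun x y hy => by
    rw [hPsi, (hstat x y).flux_eq (by positivity), hfree,
      cycleFluxCoeff_regionI hk0 hk1 hkcat hy]
  refine ⟨hflux, fun x y₁ y₂ h₁ h₂ => ?_⟩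
  rw [hflux x y₁ h₁, hflux x y₂ h₂, mul_div_cancel_left₀ _ (hfree_pos x y₁).ne',
    mul_div_cancel_left₀ _ (hfree_pos x y₂).ne']

/-- Closed-form flux in Region I: for `y ≤ x + Δμ + ΔGc`,
`Ψ = (1 − R)·k0·k1·kcat·(S·e^Δμ − P)/(k0·kcat + k0·k1·e^(x+Δμ) + k1·kcat·e^Δμ)`;
in particular `Ψ/(1 − R)` does not depend on `y` in Region I. -/
theorem stmt_12
    (k0 k1 kcat S P dmu dGc : ℝ)
    (hk0 : 0 < k0) (hk1 : 0 < k1) (hkcat : 0 < kcat) (hS : 0 < S) (hP : 0 < P)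
    (pE pES pEP R Psi : ℝ → ℝ → ℝ)
    (hstat : ∀ x y : ℝ,
      IsStat (k0 * S) (k0 * exp x)
        (kcat * min 1 (exp (x - y + dmu + dGc)))
        (kcat * exp dGc * min 1 (exp (y - x - dmu - dGc)))
        (k1 * exp y) (k1 * P)
        (pE x y) (pES x y) (pEP x y))
    (hR : ∀ x y : ℝ, R x y = pES x y + pEP x y)
    (hPsi : ∀ x y : ℝ, Psi x y = k0 * S * pE x y - k0 * exp x * pES x y)
    : (∀ x y : ℝ, y ≤ x + dmu + dGc →
        Psi x y = (1 - R x y) *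
          (k0 * k1 * kcat * (S * exp dmu - P) /
            (k0 * kcat + k0 * k1 * exp (x + dmu) + k1 * kcat * exp dmu))) ∧
      (∀ x y₁ y₂ : ℝ, y₁ ≤ x + dmu + dGc → y₂ ≤ x + dmu + dGc →
        Psi x y₁ / (1 - R x y₁) = Psi x y₂ / (1 - R x y₂)) :=
  stmt_12_general k0 k1 kcat S P dmu dGc hk0 hk1 hkcat pE pES pEP R Psi hstat hR hPsi
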